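/- Let a, b, σ² be real numbers with 0 < a ≤ 1/2, b > 0, and σ² > 0. Then the NBP marginal density β ↦ g(β | σ²) = (Γ(a+b)/(Γ(a)Γ(b))) ∫_0^∞ (2πσ²t)^{-1/2} exp(−β²/(2σ²t)) t^{a−1} (1+t)^{−(a+b)} dt tends to +∞ as β → 0. In particular, the marginal density of a coefficient under the normal–beta prime prior is unbounded with a singularity at zero whenever 0 < a ≤ 1/2. -/

import Mathlib

/-!
For `β ≠ 0` the factor `exp (-β² / (2σ²t))` removes the singularity of the integrand at `t = 0`,
while at infinity it decays like `t ^ (-3/2 - b)`, so the integral is finite. On the window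
`β²/σ² < t ≤ 1` that exponential factor is at least `e^(-1/2)`, and `a ≤ 1/2` gives
`t ^ (a - 3/2) ≥ t⁻¹`; hence the integral is at least a constant times
`∫_{β²/σ²}^1 dt/t = log (σ²/β²)`, which tends to `+∞` as `β → 0`.
-/

open Real MeasureTheory Filter Topology Set

noncomputable def nbpIntegrand (a b σ2 β t : ℝ) : ℝ :=
  (2 * π * σ2 * t) ^ (-(1 / 2 : ℝ)) * exp (-β ^ 2 / (2 * σ2 * t)) *
    t ^ (a - 1) * (1 + t) ^ (-(a + b))

section
variable {a b σ2 β t : ℝ}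

lemma continuousOn_nbpIntegrand (hσ2 : σ2 ≠ 0) :
    ContinuousOn (nbpIntegrand a b σ2 β) (Ioi 0) := by
  intro t (ht : 0 < t)
  apply ContinuousAt.continuousWithinAt
  have := pi_pos
  unfold nbpIntegrand
  fun_prop (disch := first | positivity | (left; positivity))

lemma nbpIntegrand_nonneg (hσ2 : 0 ≤ σ2) (ht : 0 ≤ t) : 0 ≤ nbpIntegrand a b σ2 β t := by
  unfold nbpIntegrand; positivity

lemma nbpIntegrand_eq (hσ2 : 0 ≤ σ2) (ht : 0 < t) :
    nbpIntegrand a b σ2 β t = (2 * π * σ2) ^ (-(1 / 2 : ℝ)) * t ^ (a - 3 / 2) *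
      exp (-β ^ 2 / (2 * σ2 * t)) * (1 + t) ^ (-(a + b)) := by
  rw [nbpIntegrand, mul_rpow (by positivity) ht.le,
    show a - 3 / 2 = -(1 / 2) + (a - 1) by ring, rpow_add ht]
  ring

lemma exp_neg_le_inv {x : ℝ} (hx : 0 < x) : exp (-x) ≤ x⁻¹ := by
  rw [exp_neg]
  exact inv_anti₀ hx (by linarith [add_one_le_exp x])

lemma integrableOn_Ioc_nbpIntegrand (ha : -1 / 2 < a) (hab : 0 ≤ a + b) (hσ2 : 0 < σ2)
    (hβ : β ≠ 0) : IntegrableOn (nbpIntegrand a b σ2 β) (Ioc 0 1) := by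
  have hdom : IntegrableOn
      (fun t ↦ (2 * π * σ2) ^ (-(1 / 2 : ℝ)) * (2 * σ2 / β ^ 2) * t ^ (a - 1 / 2)) (Ioc 0 1) := by
    have := intervalIntegral.intervalIntegrable_rpow' (a := 0) (b := 1) (r := a - 1 / 2)
      (by linarith)
    rw [intervalIntegrable_iff_integrableOn_Ioc_of_le zero_le_one] at this
    exact this.const_mul _
  refine hdom.mono' ((continuousOn_nbpIntegrand hσ2.ne').mono Ioc_subset_Ioi_self
    |>.aestronglyMeasurable measurableSet_Ioc) ?_
  filter_upwards [ae_restrict_mem measurableSet_Ioc] with t ⟨ht0, ht1⟩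
  rw [norm_of_nonneg (nbpIntegrand_nonneg hσ2.le ht0.le), nbpIntegrand_eq hσ2.le ht0]
  have hexp : exp (-β ^ 2 / (2 * σ2 * t)) ≤ 2 * σ2 * t / β ^ 2 := by
    rw [neg_div, ← inv_div (β ^ 2)]
    exact exp_neg_le_inv (div_pos (sq_pos_of_ne_zero hβ) (by positivity))
  have hone : (1 + t) ^ (-(a + b)) ≤ 1 := rpow_le_one_of_one_le_of_nonpos (by linarith) (by linarith)
  calc _ ≤ (2 * π * σ2) ^ (-(1 / 2 : ℝ)) * t ^ (a - 3 / 2) * (2 * σ2 * t / β ^ 2) * 1 := by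
        gcongr
    _ = (2 * π * σ2) ^ (-(1 / 2 : ℝ)) * (2 * σ2 / β ^ 2) * (t ^ (a - 3 / 2) * t ^ (1 : ℝ)) := by
        rw [rpow_one]; ring
    _ = _ := by rw [← rpow_add ht0]; ring_nf

lemma integrableOn_Ioi_one_nbpIntegrand (hb : -1 / 2 < b) (hab : 0 ≤ a + b) (hσ2 : 0 < σ2) :
    IntegrableOn (nbpIntegrand a b σ2 β) (Ioi 1) := by
  have hdom : IntegrableOn (fun t ↦ (2 * π * σ2) ^ (-(1 / 2 : ℝ)) * t ^ (-(3 / 2) - b)) (Ioi 1) :=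
    (integrableOn_Ioi_rpow_of_lt (by linarith) one_pos).const_mul _
  refine hdom.mono' ((continuousOn_nbpIntegrand hσ2.ne').mono (Ioi_subset_Ioi zero_le_one)
    |>.aestronglyMeasurable measurableSet_Ioi) ?_
  filter_upwards [ae_restrict_mem measurableSet_Ioi] with t (ht1 : 1 < t)
  have ht0 : 0 < t := one_pos.trans ht1
  rw [norm_of_nonneg (nbpIntegrand_nonneg hσ2.le ht0.le), nbpIntegrand_eq hσ2.le ht0]
  have hexp : exp (-β ^ 2 / (2 * σ2 * t)) ≤ 1 := exp_le_one_iff.2 (by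
    rw [neg_div]; exact neg_nonpos.2 (by positivity))
  have hone : (1 + t) ^ (-(a + b)) ≤ t ^ (-(a + b)) :=
    rpow_le_rpow_of_nonpos ht0 (by linarith) (by linarith)
  calc _ ≤ (2 * π * σ2) ^ (-(1 / 2 : ℝ)) * t ^ (a - 3 / 2) * 1 * t ^ (-(a + b)) := by gcongr
    _ = _ := by rw [mul_one, mul_assoc, ← rpow_add ht0]; ring_nf

lemma integrableOn_nbpIntegrand (ha : -1 / 2 < a) (hb : -1 / 2 < b) (hab : 0 ≤ a + b)
    (hσ2 : 0 < σ2) (hβ : β ≠ 0) : IntegrableOn (nbpIntegrand a b σ2 β) (Ioi 0) := by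
  rw [← Ioc_union_Ioi_eq_Ioi zero_le_one]
  exact (integrableOn_Ioc_nbpIntegrand ha hab hσ2 hβ).union
    (integrableOn_Ioi_one_nbpIntegrand hb hab hσ2)

lemma inv_le_nbpIntegrand (ha : a ≤ 1 / 2) (hab : 0 ≤ a + b) (hσ2 : 0 < σ2) (ht0 : 0 < t)
    (ht1 : t ≤ 1) (hβt : β ^ 2 ≤ σ2 * t) :
    (2 * π * σ2) ^ (-(1 / 2 : ℝ)) * exp (-(1 / 2)) * 2 ^ (-(a + b)) * t⁻¹ ≤
      nbpIntegrand a b σ2 β t := by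
  have hpow : t⁻¹ ≤ t ^ (a - 3 / 2) := by
    rw [← rpow_neg_one]
    exact rpow_le_rpow_of_exponent_ge ht0 ht1 (by linarith)
  have hexp : exp (-(1 / 2)) ≤ exp (-β ^ 2 / (2 * σ2 * t)) := by
    rw [exp_le_exp, neg_div, neg_le_neg_iff, div_le_iff₀ (by positivity)]
    linarith
  have hbase : (2 : ℝ) ^ (-(a + b)) ≤ (1 + t) ^ (-(a + b)) :=
    rpow_le_rpow_of_nonpos (by linarith) (by linarith) (by linarith)
  rw [nbpIntegrand_eq hσ2.le ht0]
  calc _ = (2 * π * σ2) ^ (-(1 / 2 : ℝ)) * t⁻¹ * exp (-(1 / 2)) * 2 ^ (-(a + b)) := by ring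
    _ ≤ _ := by gcongr

lemma mul_log_le_integral_nbpIntegrand (ha : 0 < a) (ha' : a ≤ 1 / 2) (hb : 0 < b)
    (hσ2 : 0 < σ2) (hβ : β ≠ 0) (hβσ : β ^ 2 ≤ σ2) :
    (2 * π * σ2) ^ (-(1 / 2 : ℝ)) * exp (-(1 / 2)) * 2 ^ (-(a + b)) * log (σ2 / β ^ 2) ≤
      ∫ t in Ioi 0, nbpIntegrand a b σ2 β t := by
  set K := (2 * π * σ2) ^ (-(1 / 2 : ℝ)) * exp (-(1 / 2)) * 2 ^ (-(a + b))
  set δ := β ^ 2 / σ2 with hδ_def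
  have hδ : 0 < δ := div_pos (sq_pos_of_ne_zero hβ) hσ2
  have hδ1 : δ ≤ 1 := (div_le_one hσ2).2 hβσ
  have hsub : Ioc δ 1 ⊆ Ioi 0 := fun t ht ↦ hδ.trans ht.1
  have hint : IntegrableOn (nbpIntegrand a b σ2 β) (Ioi 0) :=
    integrableOn_nbpIntegrand (by linarith) (by linarith) (by linarith) hσ2 hβ
  calc K * log (σ2 / β ^ 2) = ∫ t in Ioc δ 1, K * t⁻¹ := by
        rw [integral_const_mul, ← intervalIntegral.integral_of_le hδ1,
          integral_inv_of_pos hδ one_pos, hδ_def, one_div_div]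
    _ ≤ ∫ t in Ioc δ 1, nbpIntegrand a b σ2 β t := by
        refine setIntegral_mono_on ?_ (hint.mono_set hsub) measurableSet_Ioc
          fun t ht ↦ inv_le_nbpIntegrand ha' (by linarith) hσ2 (hδ.trans ht.1) ht.2 ?_
        · exact ((continuousOn_inv₀.mono fun t ht ↦ (hδ.trans_le ht.1).ne').const_smul K
            |>.integrableOn_compact isCompact_Icc).mono_set Ioc_subset_Icc_self
        · rw [← mul_div_cancel₀ (β ^ 2) hσ2.ne']
          exact mul_le_mul_of_nonneg_left ht.1.le hσ2.le
    _ ≤ ∫ t in Ioi 0, nbpIntegrand a b σ2 β t :=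
        setIntegral_mono_set hint
          (ae_restrict_of_forall_mem measurableSet_Ioi fun t ht ↦ nbpIntegrand_nonneg hσ2.le ht.le)
          hsub.eventuallyLE

lemma tendsto_log_div_sq_nhdsNE_zero {c : ℝ} (hc : c ≠ 0) :
    Tendsto (fun x : ℝ ↦ log (c / x ^ 2)) (𝓝[≠] 0) atTop := by
  have : Tendsto (fun x : ℝ ↦ log c + -2 * log x) (𝓝[≠] 0) atTop :=
    tendsto_atTop_add_const_left _ _ (tendsto_log_nhdsNE_zero.const_mul_atBot_of_neg (by norm_num))
  refine this.congr' ?_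
  filter_upwards [self_mem_nhdsWithin] with x (hx : x ≠ 0)
  rw [log_div hc (pow_ne_zero 2 hx), log_pow]
  push_cast; ring

end

theorem nbp_marginal_tendsto_atTop_at_zero
    (a b σ2 : ℝ) (ha : 0 < a) (ha' : a ≤ 1 / 2) (hb : 0 < b) (hσ2 : 0 < σ2) :
    Tendsto (fun β : ℝ =>
        (Real.Gamma (a + b) / (Real.Gamma a * Real.Gamma b)) *
          ∫ t in Set.Ioi (0 : ℝ),
            (2 * π * σ2 * t) ^ (-(1 / 2 : ℝ)) * Real.exp (-β ^ 2 / (2 * σ2 * t)) *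
              t ^ (a - 1) * (1 + t) ^ (-(a + b)))
      (𝓝[≠] (0 : ℝ)) atTop := by
  set C := Real.Gamma (a + b) / (Real.Gamma a * Real.Gamma b)
  set K := (2 * π * σ2) ^ (-(1 / 2 : ℝ)) * exp (-(1 / 2)) * 2 ^ (-(a + b))
  have hCK : 0 < C * K := by have := pi_pos; positivity
  have hlower : Tendsto (fun β : ℝ ↦ C * (K * log (σ2 / β ^ 2))) (𝓝[≠] 0) atTop := by
    simpa only [mul_assoc] using (tendsto_log_div_sq_nhdsNE_zero hσ2.ne').const_mul_atTop hCK
  have hsmall : ∀ᶠ β : ℝ in 𝓝[≠] 0, β ^ 2 < σ2 :=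
    nhdsWithin_le_nhds <| (continuous_pow 2).tendsto' 0 0 (zero_pow two_ne_zero)
      |>.eventually (gt_mem_nhds hσ2)
  refine tendsto_atTop_mono' _ ?_ hlower
  filter_upwards [self_mem_nhdsWithin, hsmall] with β (hβ : β ≠ 0) hβσ
  exact mul_le_mul_of_nonneg_left
    (mul_log_le_integral_nbpIntegrand ha ha' hb hσ2 hβ hβσ.le) (by positivity)
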